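/- Let σ be a density operator on a D-dimensional complex Hilbert space and let X = D·⟨φ|σ|φ⟩ where |φ⟩ is drawn from Haar(D). Then E[X] = 1, E[X²] = D·(1 + ‖σ‖₂²)/(D+1), and consequently E[(1−X)²] = (D·‖σ‖₂² − 1)/(D+1). -/

import Mathlib

open MeasureTheory Matrix
open scoped ComplexOrder

noncomputable section

instance matrixMeasurableSpace {m n : Type*} : MeasurableSpace (Matrix m n ℂ) :=
  inferInstanceAs (MeasurableSpace (m → n → ℂ))

/-- The squared norm `⟨φ|φ⟩` of a vector. -/
def nsq {ι : Type*} [Fintype ι] (φ : ι → ℂ) : ℂ := star φ ⬝ᵥ φ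

/-- The quadratic form `⟨φ|σ|φ⟩`. -/
def qForm {ι : Type*} [Fintype ι] (σ : Matrix ι ι ℂ) (φ : ι → ℂ) : ℂ :=
  star φ ⬝ᵥ σ.mulVec φ

/-- The rank-one projector `|ψ⟩⟨ψ|`. -/
def proj {ι : Type*} (ψ : ι → ℂ) : Matrix ι ι ℂ := Matrix.vecMulVec ψ (star ψ)

/-- The `k`-fold tensor (Kronecker) power of a matrix. -/
def tpow {ι : Type*} (k : ℕ) (A : Matrix ι ι ℂ) : Matrix (Fin k → ι) (Fin k → ι) ℂ :=
  Matrix.of fun r c => ∏ i, A (r i) (c i)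

/-- The `k`-fold tensor power of a vector. -/
def vpow {ι : Type*} (k : ℕ) (ψ : ι → ℂ) : (Fin k → ι) → ℂ := fun r => ∏ i, ψ (r i)

/-- The permutation operator `π̂` on the `k`-fold tensor power. -/
def permOp (ι : Type*) [DecidableEq ι] (k : ℕ) (π : Equiv.Perm (Fin k)) :
    Matrix (Fin k → ι) (Fin k → ι) ℂ :=
  Matrix.of fun r c => if ∀ i, r i = c (π i) then 1 else 0

/-- The dimension `binom (D + k - 1) k` of the symmetric subspace. -/
def symDim (D k : ℕ) : ℕ := Nat.choose (D + k - 1) k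

/-- The `k`-th moment `ρ_Haar^(k) = P_sym^(k) / D_k` of the Haar ensemble. -/
def haarMoment (ι : Type*) [Fintype ι] [DecidableEq ι] (k : ℕ) :
    Matrix (Fin k → ι) (Fin k → ι) ℂ :=
  ((k.factorial : ℂ) * (symDim (Fintype.card ι) k : ℂ))⁻¹ •
    ∑ π : Equiv.Perm (Fin k), permOp ι k π

/-- The singular values of a matrix. -/
def singVals {ι : Type*} [Fintype ι] [DecidableEq ι] (A : Matrix ι ι ℂ) : ι → ℝ := fun i =>
  Real.sqrt ((Matrix.isHermitian_conjTranspose_mul_self A).eigenvalues i)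

/-- The trace (Schatten 1-) norm. -/
def traceNorm {ι : Type*} [Fintype ι] [DecidableEq ι] (A : Matrix ι ι ℂ) : ℝ :=
  ∑ i, singVals A i

/-- The Schatten `p`-norm. -/
def schatten {ι : Type*} [Fintype ι] [DecidableEq ι] (p : ℝ) (A : Matrix ι ι ℂ) : ℝ :=
  (∑ i, singVals A i ^ p) ^ (1 / p)

/-- The Schatten `∞` (operator) norm. -/
def schattenInf {ι : Type*} [Fintype ι] [DecidableEq ι] (A : Matrix ι ι ℂ) : ℝ :=
  ⨆ i, singVals A i

open Classical in
/-- The positive-semidefinite square root (with junk value `0` off the PSD cone). -/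
def msqrt {ι : Type*} [Fintype ι] [DecidableEq ι] (σ : Matrix ι ι ℂ) : Matrix ι ι ℂ :=
  if h : σ.PosSemidef then
    h.1.eigenvectorUnitary.1 * diagonal ((↑) ∘ (√·) ∘ h.1.eigenvalues) *
      (star h.1.eigenvectorUnitary : Matrix ι ι ℂ)
  else 0

/-- `μ` is the Haar (i.e. unitarily invariant) probability measure on the unit sphere. -/
structure IsHaarSphere {ι : Type*} [Fintype ι] [DecidableEq ι] (μ : Measure (ι → ℂ)) :
    Prop where
  prob : IsProbabilityMeasure μ
  sphere : μ {φ | nsq φ = 1} = 1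
  invar : ∀ U : Matrix ι ι ℂ, U ∈ Matrix.unitaryGroup ι ℂ →
    Measure.map (fun φ => U.mulVec φ) μ = μ

/-- `τ` is the Haar probability measure on the unitary group. -/
structure IsHaarUnitary {ι : Type*} [Fintype ι] [DecidableEq ι]
    (τ : Measure (Matrix ι ι ℂ)) : Prop where
  prob : IsProbabilityMeasure τ
  unitary : τ {U | U ∈ Matrix.unitaryGroup ι ℂ} = 1
  invar : ∀ V ∈ Matrix.unitaryGroup ι ℂ, Measure.map (fun U => V * U) τ = τ

/-- The `k`-th moment `ρ_Scrooge^(k)(σ)` of the Scrooge ensemble `Scrooge(σ)`,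
where `μ` is the Haar measure on the unit sphere. -/
def scroogeMoment {ι : Type*} [Fintype ι] [DecidableEq ι] (k : ℕ) (σ : Matrix ι ι ℂ)
    (μ : Measure (ι → ℂ)) : Matrix (Fin k → ι) (Fin k → ι) ℂ :=
  Matrix.of fun r c =>
    (Fintype.card ι : ℂ) *
      ∫ φ, tpow k (msqrt σ * proj φ * msqrt σ) r c / qForm σ φ ^ (k - 1) ∂μ

/-- The `k`-th moment of an ensemble of pure states described by a measure `ν` on vectors. -/
def ensMoment {ι : Type*} [Fintype ι] [DecidableEq ι] (k : ℕ) (ν : Measure (ι → ℂ)) :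
    Matrix (Fin k → ι) (Fin k → ι) ℂ :=
  Matrix.of fun r c => ∫ ψ, tpow k (proj ψ) r c ∂ν

/-- An orthonormal family of vectors. -/
def OrthonormalFam {κ ι : Type*} [Fintype ι] [DecidableEq κ] (e : κ → (ι → ℂ)) : Prop :=
  ∀ i j, star (e i) ⬝ᵥ e j = (if i = j then (1 : ℂ) else 0)

/-- The (unnormalized) conditional vector `(I_A ⊗ ⟨z|)|Ψ⟩`. -/
def projVec {ιA ιB : Type*} [Fintype ιB] (z : ιB → ℂ) (Ψ : ιA × ιB → ℂ) : ιA → ℂ :=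
  fun a => ∑ b, star (z b) * Ψ (a, b)

/-- The `k`-th moment `ρ_E^(k)(Ψ)` of the projected ensemble of `Ψ`, obtained by
measuring subsystem `B` in the orthonormal basis `e` (terms with vanishing outcome
probability give `0`, by the `0⁻¹ = 0` convention). -/
def projMoment {ιA ιB : Type*} [Fintype ιA] [Fintype ιB] (k : ℕ) (e : ιB → (ιB → ℂ))
    (Ψ : ιA × ιB → ℂ) : Matrix (Fin k → ιA) (Fin k → ιA) ℂ :=
  ∑ z, (nsq (projVec (e z) Ψ) ^ (k - 1))⁻¹ • tpow k (proj (projVec (e z) Ψ))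

/-- Partial trace over `A`. -/
def ptraceA {ιA ιB : Type*} [Fintype ιA] (σ : Matrix (ιA × ιB) (ιA × ιB) ℂ) :
    Matrix ιB ιB ℂ :=
  Matrix.of fun b b' => ∑ a, σ (a, b) (a, b')

/-- Partial trace over `B`. -/
def ptraceB {ιA ιB : Type*} [Fintype ιB] (σ : Matrix (ιA × ιB) (ιA × ιB) ℂ) :
    Matrix ιA ιA ℂ :=
  Matrix.of fun a a' => ∑ b, σ (a, b) (a', b)

/-- The (unnormalized) conditional operator `σ_{A|z} = (I_A ⊗ ⟨z|) σ (I_A ⊗ |z⟩)`. -/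
def condA {ιA ιB : Type*} [Fintype ιB] (σ : Matrix (ιA × ιB) (ιA × ιB) ℂ) (z : ιB → ℂ) :
    Matrix ιA ιA ℂ :=
  Matrix.of fun a a' => ∑ b, ∑ b', star (z b) * σ (a, b) (a', b') * z b'

/-- The normalized conditional state `σ̂_{A|z} = σ_{A|z} / ⟨z|σ_B|z⟩`. -/
def condAhat {ιA ιB : Type*} [Fintype ιA] [Fintype ιB]
    (σ : Matrix (ιA × ιB) (ιA × ιB) ℂ) (z : ιB → ℂ) : Matrix ιA ιA ℂ :=
  (qForm (ptraceA σ) z)⁻¹ • condA σ z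

/-- Normalization of a vector. -/
def normalize' {ι : Type*} [Fintype ι] (ψ : ι → ℂ) : ι → ℂ :=
  (Real.sqrt (nsq ψ).re)⁻¹ • ψ

/-- `(I_A ⊗ U)|Ψ⟩`. -/
def applyB {ιA ιB : Type*} [Fintype ιB] (U : Matrix ιB ιB ℂ) (Ψ : ιA × ιB → ℂ) :
    ιA × ιB → ℂ :=
  fun p => ∑ b', U p.2 b' * Ψ (p.1, b')

/-- Partial trace over the `A` factors of an operator on `(H_A ⊗ H_B)^{⊗k}`. -/
def ptraceAk {ιA ιB : Type*} [Fintype ιA] (k : ℕ)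
    (T : Matrix (Fin k → ιA × ιB) (Fin k → ιA × ιB) ℂ) :
    Matrix (Fin k → ιB) (Fin k → ιB) ℂ :=
  Matrix.of fun r c => ∑ g : Fin k → ιA, T (fun i => (g i, r i)) (fun i => (g i, c i))

/-- The uniform probability measure on `[0, 2π)^J`. -/
def phaseMeasure (J : Type*) [Fintype J] : Measure (J → ℝ) :=
  Measure.pi fun _ =>
    (ENNReal.ofReal (2 * Real.pi))⁻¹ • volume.restrict (Set.Ico 0 (2 * Real.pi))

/-- `γ` is a mean-zero (circularly symmetric) complex Gaussian distribution. -/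
def IsCplxGaussian (γ : Measure ℂ) : Prop :=
  ∃ v : NNReal, v ≠ 0 ∧
    γ = Measure.map (fun p : ℝ × ℝ => (⟨p.1, p.2⟩ : ℂ))
      ((ProbabilityTheory.gaussianReal 0 v).prod (ProbabilityTheory.gaussianReal 0 v))


namespace Stmt1Aux

open Complex MeasureTheory

variable {D : ℕ} {μ : Measure (Fin D → ℂ)}

lemma nsq_eq (φ : Fin D → ℂ) : nsq φ = ((∑ i, Complex.normSq (φ i) : ℝ) : ℂ) := by
  simp [nsq, dotProduct, Complex.normSq_eq_conj_mul_self]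

lemma ae_sphere (hμ : IsHaarSphere μ) : ∀ᵐ φ ∂μ, nsq φ = 1 := by
  have hmeas : MeasurableSet {φ : Fin D → ℂ | nsq φ = 1} := by
    have : Continuous fun φ : Fin D → ℂ => nsq φ := by
      simp only [nsq, dotProduct]
      exact continuous_finset_sum _ fun i _ =>
        ((Complex.continuous_conj.comp (continuous_apply i)).mul (continuous_apply i))
    exact (this.measurable (measurableSet_singleton 1) : MeasurableSet (nsq ⁻¹' {1}))
  have := hμ.prob
  rw [MeasureTheory.ae_iff]
  have h2 : {φ : Fin D → ℂ | ¬ nsq φ = 1} = {φ : Fin D → ℂ | nsq φ = 1}ᶜ := rfl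
  rw [h2, measure_compl hmeas (measure_ne_top _ _), hμ.sphere, measure_univ, tsub_self]

lemma ae_bound (hμ : IsHaarSphere μ) : ∀ᵐ φ ∂μ, ∀ i, ‖φ i‖ ≤ 1 := by
  filter_upwards [ae_sphere hμ] with φ hφ i
  rw [nsq_eq] at hφ
  have h1 : (∑ i, Complex.normSq (φ i) : ℝ) = 1 := by exact_mod_cast hφ
  have h2 : Complex.normSq (φ i) ≤ 1 := by
    rw [← h1]
    exact Finset.single_le_sum (f := fun i => Complex.normSq (φ i))
      (fun i _ => Complex.normSq_nonneg _) (Finset.mem_univ i)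
  have := Complex.sq_norm (φ i)
  nlinarith [norm_nonneg (φ i)]

lemma integrable_bd (hμ : IsHaarSphere μ) {f : (Fin D → ℂ) → ℂ} (hf : Continuous f)
    (C : ℝ) (hC : ∀ φ, (∀ i, ‖φ i‖ ≤ 1) → ‖f φ‖ ≤ C) : Integrable f μ := by
  have := hμ.prob
  refine (integrable_const C).mono' hf.aestronglyMeasurable ?_
  filter_upwards [ae_bound hμ] with φ hφ
  exact hC φ hφ

lemma int_unitary (hμ : IsHaarSphere μ) {U : Matrix (Fin D) (Fin D) ℂ}
    (hU : U ∈ Matrix.unitaryGroup (Fin D) ℂ) {f : (Fin D → ℂ) → ℂ} (hf : Continuous f) :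
    ∫ φ, f (U.mulVec φ) ∂μ = ∫ φ, f φ ∂μ := by
  have hc : Continuous fun φ : Fin D → ℂ => U.mulVec φ := by
    refine continuous_pi fun i => ?_
    simp only [Matrix.mulVec, dotProduct]
    exact continuous_finset_sum _ fun j _ => continuous_const.mul (continuous_apply j)
  conv_rhs => rw [← hμ.invar U hU]
  rw [MeasureTheory.integral_map hc.measurable.aemeasurable]
  rw [hμ.invar U hU]
  exact hf.aestronglyMeasurable



/-- permutation matrix -/
def permM (e : Equiv.Perm (Fin D)) : Matrix (Fin D) (Fin D) ℂ :=
  Matrix.of fun i j => if e j = i then 1 else 0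

lemma permM_mem (e : Equiv.Perm (Fin D)) : permM e ∈ Matrix.unitaryGroup (Fin D) ℂ := by
  rw [Matrix.mem_unitaryGroup_iff]
  ext i j
  simp only [Matrix.mul_apply, permM, Matrix.star_eq_conjTranspose, Matrix.conjTranspose_apply,
    Matrix.of_apply, Matrix.one_apply]
  calc ∑ k, (if e k = i then (1:ℂ) else 0) * star (if e k = j then (1:ℂ) else 0)
      = ∑ k, (if k = e.symm i then (if k = e.symm j then (1:ℂ) else 0) else 0) := by
        refine Finset.sum_congr rfl fun k _ => ?_
        simp only [Equiv.eq_symm_apply]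
        split_ifs <;> simp
    _ = if e.symm i = e.symm j then 1 else 0 := by simp [Finset.sum_ite_eq']
    _ = if i = j then 1 else 0 := by simp

lemma permM_mulVec (e : Equiv.Perm (Fin D)) (φ : Fin D → ℂ) (i : Fin D) :
    (permM e).mulVec φ i = φ (e.symm i) := by
  simp only [Matrix.mulVec, dotProduct, permM, Matrix.of_apply, ite_mul, one_mul, zero_mul]
  calc ∑ k, (if e k = i then φ k else 0)
      = ∑ k, (if k = e.symm i then φ k else 0) := by
        refine Finset.sum_congr rfl fun k _ => ?_
        simp only [Equiv.eq_symm_apply]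
    _ = φ (e.symm i) := by simp [Finset.sum_ite_eq']

lemma sum_twoPoint {p q : Fin D} (hpq : p ≠ q) (A B : ℂ) :
    ∑ k, (if k = p then A else if k = q then B else 0) = A + B := by
  have h : ∀ k : Fin D, (if k = p then A else if k = q then B else 0) =
      (if k = p then A else 0) + (if k = q then B else 0) := by
    intro k; split_ifs with h1 h2 <;> simp_all
  simp [h, Finset.sum_add_distrib, Finset.sum_ite_eq']

noncomputable def rr : ℂ := (↑(Real.sqrt 2) : ℂ)⁻¹

lemma rr_mul_rr : rr * rr = 2⁻¹ := by
  rw [rr, ← mul_inv, ← Complex.ofReal_mul,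
    Real.mul_self_sqrt (by norm_num : (0:ℝ) ≤ 2)]
  norm_num

lemma star_rr : star rr = rr := by
  rw [rr]
  simp [← Complex.ofReal_inv, Complex.conj_ofReal]

/-- the Hadamard-type rotation on coordinates p,q -/
noncomputable def hadaM (p q : Fin D) : Matrix (Fin D) (Fin D) ℂ :=
  Matrix.of fun i j =>
    if i = p then (if j = p then rr else if j = q then rr else 0)
    else if i = q then (if j = p then rr else if j = q then -rr else 0)
    else if j = i then 1 else 0

lemma hadaM_row_p (p q k : Fin D) : 
    hadaM p q p k = if k = p then rr else if k = q then rr else 0 := by simp [hadaM]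

lemma hadaM_row_q (p q k : Fin D) (hpq : p ≠ q) :
    hadaM p q q k = if k = p then rr else if k = q then -rr else 0 := by
  simp [hadaM, Ne.symm hpq]

lemma hadaM_row_o (p q t k : Fin D) (htp : t ≠ p) (htq : t ≠ q) :
    hadaM p q t k = if k = t then 1 else 0 := by simp [hadaM, htp, htq]

lemma hadaM_mem {p q : Fin D} (hpq : p ≠ q) : hadaM p q ∈ Matrix.unitaryGroup (Fin D) ℂ := by
  have key : ∀ (A B A' B' : ℂ),
      ∑ k, (if k = p then A else if k = q then B else 0) *
        star (if k = p then A' else if k = q then B' else 0) = A * star A' + B * star B' := by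
    intro A B A' B'
    calc ∑ k, (if k = p then A else if k = q then B else 0) *
          star (if k = p then A' else if k = q then B' else 0)
        = ∑ k, (if k = p then A * star A' else if k = q then B * star B' else 0) :=
          Finset.sum_congr rfl fun k _ => by split_ifs <;> simp
      _ = _ := sum_twoPoint hpq _ _
  have keyA : ∀ (t : Fin D), t ≠ p → t ≠ q → ∀ (A B C : ℂ),
      ∑ k, (if k = p then A else if k = q then B else 0) * star (if k = t then C else 0) = 0 := by
    intro t htp htq A B C
    refine Finset.sum_eq_zero fun k _ => ?_
    split_ifs <;> simp_all
  have keyB : ∀ (t : Fin D), t ≠ p → t ≠ q → ∀ (A B C : ℂ),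
      ∑ k, (if k = t then C else 0) * star (if k = p then A else if k = q then B else 0) = 0 := by
    intro t htp htq A B C
    refine Finset.sum_eq_zero fun k _ => ?_
    split_ifs <;> simp_all
  have keyC : ∀ (s t : Fin D),
      ∑ k, (if k = s then (1:ℂ) else 0) * star (if k = t then (1:ℂ) else 0)
        = if s = t then 1 else 0 := by
    intro s t
    calc ∑ k, (if k = s then (1:ℂ) else 0) * star (if k = t then (1:ℂ) else 0)
        = ∑ k, (if k = s then (if k = t then (1:ℂ) else 0) else 0) :=
          Finset.sum_congr rfl fun k _ => by split_ifs <;> simp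
      _ = _ := by simp [Finset.sum_ite_eq']
  rw [Matrix.mem_unitaryGroup_iff]
  ext i j
  simp only [Matrix.mul_apply, Matrix.star_eq_conjTranspose, Matrix.conjTranspose_apply]
  rcases eq_or_ne i p with hip | hip <;> rcases eq_or_ne j p with hjp | hjp
  · rw [hip, hjp]
    simp only [hadaM_row_p p q]
    rw [key, star_rr, rr_mul_rr, Matrix.one_apply_eq]
    norm_num
  · rcases eq_or_ne j q with hjq | hjq
    · rw [hip, hjq]
      simp only [hadaM_row_p p q, hadaM_row_q p q _ hpq]
      rw [key, star_neg, star_rr, Matrix.one_apply_ne hpq]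
      ring
    · rw [hip]
      simp only [hadaM_row_p p q, hadaM_row_o p q j _ hjp hjq]
      rw [keyA j hjp hjq, Matrix.one_apply_ne (show p ≠ j from fun h => hjp h.symm)]
  · rcases eq_or_ne i q with hiq | hiq
    · rw [hiq, hjp]
      simp only [hadaM_row_p p q, hadaM_row_q p q _ hpq]
      rw [key, star_rr, Matrix.one_apply_ne (Ne.symm hpq)]
      ring
    · rw [hjp]
      simp only [hadaM_row_p p q, hadaM_row_o p q i _ hip hiq]
      rw [keyB i hip hiq, Matrix.one_apply_ne hip]
  · rcases eq_or_ne i q with hiq | hiq <;> rcases eq_or_ne j q with hjq | hjq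
    · rw [hiq, hjq]
      simp only [hadaM_row_q p q _ hpq]
      rw [key, star_neg, star_rr, Matrix.one_apply_eq]
      have h2 := rr_mul_rr
      calc rr * rr + -rr * -rr = rr * rr + rr * rr := by ring
        _ = 1 := by rw [h2]; norm_num
    · rw [hiq]
      simp only [hadaM_row_q p q _ hpq, hadaM_row_o p q j _ hjp hjq]
      rw [keyA j hjp hjq, Matrix.one_apply_ne (show q ≠ j from fun h => hjq h.symm)]
    · rw [hjq]
      simp only [hadaM_row_q p q _ hpq, hadaM_row_o p q i _ hip hiq]
      rw [keyB i hip hiq, Matrix.one_apply_ne hiq]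
    · simp only [hadaM_row_o p q i _ hip hiq, hadaM_row_o p q j _ hjp hjq]
      rw [keyC i j, Matrix.one_apply]

lemma hadaM_mulVec {p q : Fin D} (hpq : p ≠ q) (φ : Fin D → ℂ) :
    (hadaM p q).mulVec φ = fun i =>
      if i = p then rr * φ p + rr * φ q
      else if i = q then rr * φ p - rr * φ q else φ i := by
  funext i
  simp only [Matrix.mulVec, dotProduct]
  rcases eq_or_ne i p with hip | hip
  · rw [hip, if_pos rfl]
    calc ∑ k, hadaM p q p k * φ k
        = ∑ k, (if k = p then rr * φ p else if k = q then rr * φ q else 0) := by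
          refine Finset.sum_congr rfl fun k _ => ?_
          rw [hadaM_row_p p q]
          split_ifs <;> simp_all
      _ = _ := sum_twoPoint hpq _ _
  · rw [if_neg hip]
    rcases eq_or_ne i q with hiq | hiq
    · rw [hiq, if_pos rfl]
      calc ∑ k, hadaM p q q k * φ k
          = ∑ k, (if k = p then rr * φ p else if k = q then -(rr * φ q) else 0) := by
            refine Finset.sum_congr rfl fun k _ => ?_
            rw [hadaM_row_q p q _ hpq]
            split_ifs <;> simp_all
        _ = rr * φ p + -(rr * φ q) := sum_twoPoint hpq _ _
        _ = _ := by ring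
    · rw [if_neg hiq]
      calc ∑ k, hadaM p q i k * φ k
          = ∑ k, (if k = i then φ k else 0) := by
            refine Finset.sum_congr rfl fun k _ => ?_
            rw [hadaM_row_o p q i _ hip hiq]
            split_ifs <;> simp_all
        _ = φ i := by simp [Finset.sum_ite_eq']


def mon2 (i j k l : Fin D) (φ : Fin D → ℂ) : ℂ :=
  (starRingEnd ℂ) (φ i) * φ j * ((starRingEnd ℂ) (φ k) * φ l)

noncomputable def M1 (μ : Measure (Fin D → ℂ)) (i j : Fin D) : ℂ :=
  ∫ φ, (starRingEnd ℂ) (φ i) * φ j ∂μ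

noncomputable def M2 (μ : Measure (Fin D → ℂ)) (i j k l : Fin D) : ℂ :=
  ∫ φ, mon2 i j k l φ ∂μ

lemma cont_mon1 (i j : Fin D) : Continuous (fun φ : Fin D → ℂ => (starRingEnd ℂ) (φ i) * φ j) :=
  (Complex.continuous_conj.comp (continuous_apply i)).mul (continuous_apply j)

lemma cont_mon2 (i j k l : Fin D) : Continuous (mon2 i j k l) :=
  ((cont_mon1 i j).mul (cont_mon1 k l))

lemma norm_mon1_le {φ : Fin D → ℂ} (hφ : ∀ i, ‖φ i‖ ≤ 1) (i j : Fin D) :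
    ‖(starRingEnd ℂ) (φ i) * φ j‖ ≤ 1 := by
  rw [norm_mul, RCLike.norm_conj]
  calc ‖φ i‖ * ‖φ j‖ ≤ 1 * 1 :=
    mul_le_mul (hφ i) (hφ j) (norm_nonneg _) zero_le_one
  _ = 1 := mul_one 1

lemma integ_mon1 (hμ : IsHaarSphere μ) (i j : Fin D) :
    Integrable (fun φ : Fin D → ℂ => (starRingEnd ℂ) (φ i) * φ j) μ :=
  integrable_bd hμ (cont_mon1 i j) 1 fun φ hφ => norm_mon1_le hφ i j

lemma integ_mon2 (hμ : IsHaarSphere μ) (i j k l : Fin D) :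
    Integrable (mon2 i j k l) μ := by
  refine integrable_bd hμ (cont_mon2 i j k l) 1 fun φ hφ => ?_
  rw [mon2, norm_mul]
  calc ‖(starRingEnd ℂ) (φ i) * φ j‖ * ‖(starRingEnd ℂ) (φ k) * φ l‖ ≤ 1 * 1 :=
    mul_le_mul (norm_mon1_le hφ i j) (norm_mon1_le hφ k l) (norm_nonneg _) zero_le_one
  _ = 1 := mul_one 1

lemma M2_permute (hμ : IsHaarSphere μ) (e : Equiv.Perm (Fin D)) (i j k l : Fin D) :
    M2 μ (e i) (e j) (e k) (e l) = M2 μ i j k l := by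
  have h := int_unitary hμ (permM_mem (e := e.symm)) (cont_mon2 i j k l)
  rw [M2, M2, ← h]
  refine integral_congr_ae (Filter.Eventually.of_forall fun φ => ?_)
  simp [mon2, permM_mulVec]

/-- the phase diagonal unitary -/
def phaseD (t : Fin D) : Matrix (Fin D) (Fin D) ℂ :=
  Matrix.diagonal (fun s => if s = t then Complex.I else 1)

lemma phaseD_mem (t : Fin D) : phaseD t ∈ Matrix.unitaryGroup (Fin D) ℂ := by
  rw [Matrix.mem_unitaryGroup_iff, phaseD, Matrix.star_eq_conjTranspose,
    Matrix.diagonal_conjTranspose, Matrix.diagonal_mul_diagonal]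
  convert Matrix.diagonal_one
  rename_i s
  by_cases h : s = t <;> simp [h, Complex.mul_conj]

lemma M2_phase (hμ : IsHaarSphere μ) (t i j k l : Fin D) :
    M2 μ i j k l = ((if i = t then -Complex.I else 1) * (if j = t then Complex.I else 1) *
      ((if k = t then -Complex.I else 1) * (if l = t then Complex.I else 1))) * M2 μ i j k l := by
  have h := int_unitary hμ (phaseD_mem t) (cont_mon2 i j k l)
  have hpt : ∀ φ : Fin D → ℂ, mon2 i j k l ((phaseD t).mulVec φ) =
      ((if i = t then -Complex.I else 1) * (if j = t then Complex.I else 1) *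
        ((if k = t then -Complex.I else 1) * (if l = t then Complex.I else 1))) *
        mon2 i j k l φ := by
    intro φ
    simp only [mon2, phaseD, Matrix.mulVec_diagonal, _root_.map_mul, apply_ite (starRingEnd ℂ),
      Complex.conj_I, _root_.map_one]
    split_ifs <;> ring_nf <;> simp [pow_succ, Complex.I_mul_I] <;> ring
  have h2 : (∫ φ, mon2 i j k l ((phaseD t).mulVec φ) ∂μ) =
      ((if i = t then -Complex.I else 1) * (if j = t then Complex.I else 1) *
        ((if k = t then -Complex.I else 1) * (if l = t then Complex.I else 1))) * M2 μ i j k l := by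
    rw [integral_congr_ae (Filter.Eventually.of_forall fun φ => hpt φ), integral_const_mul]
    rfl
  rw [M2]
  conv_lhs => rw [← h]
  rw [h2]
  rfl

lemma M2_comm (i j k l : Fin D) : M2 μ i j k l = M2 μ k l i j := by
  rw [M2, M2]
  refine integral_congr_ae (Filter.Eventually.of_forall fun φ => ?_)
  simp only [mon2]; ring

lemma M2_zero (hμ : IsHaarSphere μ) {i j k l : Fin D}
    (H1 : ¬(i = j ∧ k = l)) (H2 : ¬(i = l ∧ k = j)) : M2 μ i j k l = 0 := by
  -- find a coordinate with unbalanced phase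
  obtain ⟨t, ht⟩ : ∃ t : Fin D,
      ((if i = t then 1 else 0) + (if k = t then 1 else 0) : ℕ) ≠
        ((if j = t then 1 else 0) + (if l = t then 1 else 0) : ℕ) := by
    by_cases hij : i = j
    · have hkl : ¬ k = l := fun h => H1 ⟨hij, h⟩
      exact ⟨k, by subst hij; split_ifs <;> simp_all <;> omega⟩
    · by_cases hil : i = l
      · have hkj : ¬ k = j := fun h => H2 ⟨hil, h⟩
        exact ⟨k, by subst hil; split_ifs <;> simp_all <;> omega⟩
      · exact ⟨i, by split_ifs <;> simp_all <;> omega⟩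
  have hphase := M2_phase hμ t i j k l
  set C : ℂ := (if i = t then -Complex.I else 1) * (if j = t then Complex.I else 1) *
      ((if k = t then -Complex.I else 1) * (if l = t then Complex.I else 1)) with hCdef
  have hC : C ≠ 1 := by
    rw [hCdef]
    by_cases h1 : i = t <;> by_cases h2 : j = t <;> by_cases h3 : k = t <;> by_cases h4 : l = t <;>
      simp_all <;>
      intro h <;> rw [Complex.ext_iff] at h <;> simp_all <;> norm_num at h
  have h0 : (1 - C) * M2 μ i j k l = 0 := by linear_combination hphase
  rcases mul_eq_zero.mp h0 with h | h
  · exact absurd (by linear_combination -h) hC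
  · exact h


lemma M2_cross (i k : Fin D) : M2 μ i k k i = M2 μ i i k k := by
  rw [M2, M2]
  refine integral_congr_ae (Filter.Eventually.of_forall fun φ => ?_)
  simp only [mon2]; ring

lemma M2_diag_eq (hμ : IsHaarSphere μ) (i i' : Fin D) :
    M2 μ i i i i = M2 μ i' i' i' i' := by
  have := M2_permute hμ (Equiv.swap i' i) i i i i
  simpa using this.symm

lemma exists_perm_pair {i k i' k' : Fin D} (hik : i ≠ k) (hik' : i' ≠ k') :
    ∃ g : Equiv.Perm (Fin D), g i = i' ∧ g k = k' := by
  refine ⟨(Equiv.swap i i').trans (Equiv.swap ((Equiv.swap i i') k) k'), ?_, ?_⟩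
  · simp only [Equiv.trans_apply, Equiv.swap_apply_left]
    apply Equiv.swap_apply_of_ne_of_ne
    · intro h
      have h2 := congrArg (Equiv.swap i i') h
      rw [Equiv.swap_apply_right, Equiv.swap_apply_self] at h2
      exact hik h2
    · exact hik'
  · simp only [Equiv.trans_apply, Equiv.swap_apply_left]

lemma M2_offdiag_eq (hμ : IsHaarSphere μ) {i k i' k' : Fin D} (hik : i ≠ k) (hik' : i' ≠ k') :
    M2 μ i i k k = M2 μ i' i' k' k' := by
  obtain ⟨g, hgi, hgk⟩ := exists_perm_pair hik hik'
  have := M2_permute hμ g i i k k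
  rw [hgi, hgk] at this
  exact this.symm

lemma M1_phase (hμ : IsHaarSphere μ) (t i j : Fin D) :
    M1 μ i j = ((if i = t then -Complex.I else 1) * (if j = t then Complex.I else 1)) * M1 μ i j := by
  have h := int_unitary hμ (phaseD_mem t) (cont_mon1 i j)
  have hpt : ∀ φ : Fin D → ℂ, (starRingEnd ℂ) (((phaseD t).mulVec φ) i) * ((phaseD t).mulVec φ) j =
      ((if i = t then -Complex.I else 1) * (if j = t then Complex.I else 1)) *
        ((starRingEnd ℂ) (φ i) * φ j) := by
    intro φ
    simp only [phaseD, Matrix.mulVec_diagonal, _root_.map_mul, apply_ite (starRingEnd ℂ),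
      Complex.conj_I, _root_.map_one]
    split_ifs <;> ring_nf <;> simp [pow_succ, Complex.I_mul_I] <;> ring
  have h2 : (∫ φ, (starRingEnd ℂ) (((phaseD t).mulVec φ) i) * ((phaseD t).mulVec φ) j ∂μ) =
      ((if i = t then -Complex.I else 1) * (if j = t then Complex.I else 1)) * M1 μ i j := by
    rw [integral_congr_ae (Filter.Eventually.of_forall fun φ => hpt φ), integral_const_mul]
    rfl
  rw [M1]
  conv_lhs => rw [← h]
  rw [h2]
  rfl

lemma M1_offdiag_zero (hμ : IsHaarSphere μ) {i j : Fin D} (hij : i ≠ j) : M1 μ i j = 0 := by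
  have h := M1_phase hμ j i j
  rw [if_neg hij, if_pos rfl, one_mul] at h
  have h0 : (1 - Complex.I) * M1 μ i j = 0 := by linear_combination h
  rcases mul_eq_zero.mp h0 with h | h
  · exfalso
    have : Complex.I = 1 := by linear_combination -h
    rw [Complex.ext_iff] at this
    simp at this
  · exact h

lemma M1_diag_eq (hμ : IsHaarSphere μ) (i i' : Fin D) : M1 μ i i = M1 μ i' i' := by
  have h := int_unitary hμ (permM_mem (e := Equiv.swap i i')) (cont_mon1 i' i')
  rw [M1, M1, ← h]
  refine integral_congr_ae (Filter.Eventually.of_forall fun φ => ?_)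
  simp [permM_mulVec]

lemma sum_M1_diag (hμ : IsHaarSphere μ) : ∑ i, M1 μ i i = 1 := by
  have := hμ.prob
  calc ∑ i, M1 μ i i = ∫ φ, ∑ i, (starRingEnd ℂ) (φ i) * φ i ∂μ :=
        (integral_finset_sum _ fun i _ => integ_mon1 hμ i i).symm
    _ = ∫ _φ, (1 : ℂ) ∂μ := by
        refine integral_congr_ae ?_
        filter_upwards [ae_sphere hμ] with φ hφ
        rw [← hφ, nsq]
        rfl
    _ = 1 := by simp

lemma M1_diag_val (hμ : IsHaarSphere μ) (i : Fin D) : M1 μ i i = (D : ℂ)⁻¹ := by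
  have hD : (D : ℂ) ≠ 0 := Nat.cast_ne_zero.mpr i.pos.ne'
  have hsum : ∑ j, M1 μ j j = 1 := sum_M1_diag hμ
  have hall : ∀ j, M1 μ j j = M1 μ i i := fun j => M1_diag_eq hμ j i
  rw [Finset.sum_congr rfl (fun j _ => hall j), Finset.sum_const, Finset.card_univ,
    Fintype.card_fin, nsmul_eq_mul] at hsum
  field_simp at hsum ⊢
  linear_combination hsum

lemma M1_val (hμ : IsHaarSphere μ) (i j : Fin D) :
    M1 μ i j = if i = j then (D : ℂ)⁻¹ else 0 := by
  by_cases h : i = j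
  · rw [if_pos h, h]; exact M1_diag_val hμ j
  · rw [if_neg h]; exact M1_offdiag_zero hμ h

lemma sum_M2_diag (hμ : IsHaarSphere μ) : ∑ i, ∑ k, M2 μ i i k k = 1 := by
  have := hμ.prob
  have h1 : ∀ i, ∑ k, M2 μ i i k k = ∫ φ, ∑ k, mon2 i i k k φ ∂μ := fun i =>
    (integral_finset_sum _ fun k _ => integ_mon2 hμ i i k k).symm
  calc ∑ i, ∑ k, M2 μ i i k k = ∫ φ, ∑ i, ∑ k, mon2 i i k k φ ∂μ := by
        rw [Finset.sum_congr rfl fun i _ => h1 i]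
        exact (integral_finset_sum _ fun i _ =>
          integrable_finset_sum _ fun k _ => integ_mon2 hμ i i k k).symm
    _ = ∫ _φ, (1 : ℂ) ∂μ := by
        refine integral_congr_ae ?_
        filter_upwards [ae_sphere hμ] with φ hφ
        have : ∑ i, ∑ k, mon2 i i k k φ = nsq φ * nsq φ := by
          rw [nsq, dotProduct, Finset.sum_mul_sum]
          rfl
        rw [this, hφ, one_mul]
    _ = 1 := by simp

lemma hada_rel (hμ : IsHaarSphere μ) {p q : Fin D} (hpq : p ≠ q) :
    M2 μ p p p p = 2 * M2 μ p p q q := by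
  have h4 : rr * rr * (rr * rr) = (4 : ℂ)⁻¹ := by rw [rr_mul_rr]; norm_num
  have hcrr : (starRingEnd ℂ) rr = rr := star_rr
  set s : Fin 2 → Fin D := ![p, q] with hs
  have hpt : ∀ φ : Fin D → ℂ, mon2 p p p p ((hadaM p q).mulVec φ) =
      (4:ℂ)⁻¹ * ∑ v : (Fin 2 × Fin 2) × (Fin 2 × Fin 2),
        mon2 (s v.1.1) (s v.1.2) (s v.2.1) (s v.2.2) φ := by
    intro φ
    rw [hadaM_mulVec hpq]
    simp only [mon2, if_pos rfl, if_true, eq_self_iff_true, Fintype.sum_prod_type,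
      Fin.sum_univ_two, hs, Matrix.cons_val_zero, Matrix.cons_val_one, Matrix.head_cons,
      map_add, _root_.map_mul, hcrr]
    linear_combination (((starRingEnd ℂ) (φ p) + (starRingEnd ℂ) (φ q)) * (φ p + φ q) *
      (((starRingEnd ℂ) (φ p) + (starRingEnd ℂ) (φ q)) * (φ p + φ q))) * h4
  have h := int_unitary hμ (hadaM_mem hpq) (cont_mon2 p p p p)
  have h2 : M2 μ p p p p = (4:ℂ)⁻¹ * ∑ v : (Fin 2 × Fin 2) × (Fin 2 × Fin 2),
      M2 μ (s v.1.1) (s v.1.2) (s v.2.1) (s v.2.2) := by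
    rw [M2]
    conv_lhs => rw [← h]
    rw [integral_congr_ae (Filter.Eventually.of_forall fun φ => hpt φ), integral_const_mul,
      integral_finset_sum _ fun v _ => integ_mon2 hμ _ _ _ _]
    rfl
  have hqp : q ≠ p := Ne.symm hpq
  simp only [Fintype.sum_prod_type, Fin.sum_univ_two, hs, Matrix.cons_val_zero,
    Matrix.cons_val_one, Matrix.head_cons] at h2
  rw [show M2 μ p p p q = 0 from M2_zero hμ (by tauto) (by tauto),
    show M2 μ p p q p = 0 from M2_zero hμ (by tauto) (by tauto),
    show M2 μ p q p p = 0 from M2_zero hμ (by tauto) (by tauto),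
    show M2 μ p q p q = 0 from M2_zero hμ (by tauto) (by tauto),
    show M2 μ p q q q = 0 from M2_zero hμ (by tauto) (by tauto),
    show M2 μ q p p p = 0 from M2_zero hμ (by tauto) (by tauto),
    show M2 μ q p q p = 0 from M2_zero hμ (by tauto) (by tauto),
    show M2 μ q p q q = 0 from M2_zero hμ (by tauto) (by tauto),
    show M2 μ q q p q = 0 from M2_zero hμ (by tauto) (by tauto),
    show M2 μ q q q p = 0 from M2_zero hμ (by tauto) (by tauto)] at h2
  rw [M2_cross p q, M2_cross q p, M2_comm (μ := μ) q q p p, M2_diag_eq hμ q p] at h2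
  linear_combination 2 * h2


lemma M2_val (hμ : IsHaarSphere μ) (hD : 0 < D) (i j k l : Fin D) :
    M2 μ i j k l = ((D : ℂ) * ((D : ℂ) + 1))⁻¹ *
      ((if i = j ∧ k = l then 1 else 0) + (if i = l ∧ k = j then 1 else 0)) := by
  have hDC : (D : ℂ) ≠ 0 := Nat.cast_ne_zero.mpr hD.ne'
  have hD1C : ((D : ℂ) + 1) ≠ 0 := by
    have h : ((D : ℂ) + 1) = ((D + 1 : ℕ) : ℂ) := by push_cast; ring
    rw [h]
    exact Nat.cast_ne_zero.mpr (Nat.succ_ne_zero D)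
  set c : ℂ := ((D : ℂ) * ((D : ℂ) + 1))⁻¹ with hc
  have hkey : (∀ t : Fin D, M2 μ t t t t = 2 * c) ∧
      (∀ i' k' : Fin D, i' ≠ k' → M2 μ i' i' k' k' = c) := by
    by_cases hD2 : 2 ≤ D
    · set p : Fin D := ⟨0, hD⟩ with hp
      set q : Fin D := ⟨1, lt_of_lt_of_le one_lt_two hD2⟩ with hq
      have hpq : p ≠ q := by simp [hp, hq, Fin.ext_iff]
      set b : ℂ := M2 μ p p q q with hb
      have hab : M2 μ p p p p = 2 * b := hada_rel hμ hpq
      have hterm : ∀ i' k' : Fin D, M2 μ i' i' k' k' = if i' = k' then 2 * b else b := by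
        intro i' k'
        by_cases h : i' = k'
        · rw [if_pos h, h, M2_diag_eq hμ k' p, hab]
        · rw [if_neg h]
          exact M2_offdiag_eq hμ h hpq
      have hsum := sum_M2_diag hμ
      rw [Finset.sum_congr rfl (fun i' _ => Finset.sum_congr rfl fun k' _ => hterm i' k')] at hsum
      have hinner : ∀ i' : Fin D, ∑ k', (if i' = k' then 2 * b else b) = (D : ℂ) * b + b := by
        intro i'
        have : ∀ k' : Fin D, (if i' = k' then 2 * b else b) = b + (if i' = k' then b else 0) := by
          intro k'; split_ifs <;> ring
        rw [Finset.sum_congr rfl fun k' _ => this k', Finset.sum_add_distrib,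
          Finset.sum_ite_eq, if_pos (Finset.mem_univ i'), Finset.sum_const, Finset.card_univ,
          Fintype.card_fin, nsmul_eq_mul]
      rw [Finset.sum_congr rfl (fun i' _ => hinner i'), Finset.sum_const, Finset.card_univ,
        Fintype.card_fin, nsmul_eq_mul] at hsum
      have hbc : b = c := by
        rw [hc]
        field_simp
        linear_combination hsum
      constructor
      · intro t
        rw [M2_diag_eq hμ t p, hab, hbc]
      · intro i' k' h
        rw [M2_offdiag_eq hμ h hpq, ← hb]
        exact hbc
    · have hD1 : D = 1 := by omega
      subst hD1
      have hsum := sum_M2_diag hμ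
      rw [Fin.sum_univ_one, Fin.sum_univ_one] at hsum
      constructor
      · intro t
        have ht : t = 0 := Subsingleton.elim t 0
        rw [ht, hsum, hc]
        norm_num
      · intro i' k' h
        exact absurd (Subsingleton.elim i' k') h
  by_cases c1 : i = j ∧ k = l <;> by_cases c2 : i = l ∧ k = j
  · obtain ⟨e1, e2⟩ := c1
    obtain ⟨e3, e4⟩ := c2
    rw [if_pos ⟨e1, e2⟩, if_pos ⟨e3, e4⟩, ← e1, ← e3, show k = i from e4.trans e1.symm]
    rw [hkey.1 i]; ring
  · obtain ⟨e1, e2⟩ := c1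
    have hik : i ≠ k := fun h => c2 ⟨h.trans e2, h.symm.trans e1⟩
    rw [if_pos ⟨e1, e2⟩, if_neg c2, ← e1, ← e2, hkey.2 i k hik]; ring
  · obtain ⟨e3, e4⟩ := c2
    have hij : i ≠ j := by
      intro h
      exact c1 ⟨h, e4.trans (h.symm.trans e3)⟩
    rw [if_neg c1, if_pos ⟨e3, e4⟩, ← e3, e4, M2_cross i j, hkey.2 i j hij]; ring
  · rw [if_neg c1, if_neg c2, M2_zero hμ c1 c2]; ring

end Stmt1Aux






open Stmt1Aux

/-- first and second moments of `X = D⟨φ|σ|φ⟩` under the Haar measure. -/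
theorem statement1 (D : ℕ) (σ : Matrix (Fin D) (Fin D) ℂ) (hσ : σ.PosSemidef)
    (hσtr : σ.trace = 1) (μ : Measure (Fin D → ℂ)) (hμ : IsHaarSphere μ) :
    (∫ φ, (D : ℝ) * (qForm σ φ).re ∂μ) = 1 ∧
      (∫ φ, ((D : ℝ) * (qForm σ φ).re) ^ 2 ∂μ) =
        (D : ℝ) * (1 + schatten 2 σ ^ 2) / ((D : ℝ) + 1) ∧
      (∫ φ, (1 - (D : ℝ) * (qForm σ φ).re) ^ 2 ∂μ) =
        ((D : ℝ) * schatten 2 σ ^ 2 - 1) / ((D : ℝ) + 1) := by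
  classical
  -- positivity of D
  have hD : 0 < D := by
    rcases Nat.eq_zero_or_pos D with h0 | h; swap
    · exact h
    · exfalso
      subst h0
      have hs := hμ.sphere
      have : {φ : Fin 0 → ℂ | nsq φ = 1} = ∅ := by
        ext φ
        simp [nsq, dotProduct]
      rw [this, measure_empty] at hs
      exact zero_ne_one hs
  have hDR : (D : ℝ) ≠ 0 := Nat.cast_ne_zero.mpr hD.ne'
  have hDR1 : (D : ℝ) + 1 ≠ 0 := by positivity
  set S : ℝ := ∑ i, ∑ j, Complex.normSq (σ i j) with hSdef
  have hS0 : 0 ≤ S := Finset.sum_nonneg fun i _ => Finset.sum_nonneg fun j _ =>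
    Complex.normSq_nonneg _
  -- expansion of the quadratic form
  have hq_expand : ∀ φ : Fin D → ℂ,
      qForm σ φ = ∑ r : Fin D × Fin D, σ r.1 r.2 * ((starRingEnd ℂ) (φ r.1) * φ r.2) := by
    intro φ
    rw [qForm, dotProduct, Fintype.sum_prod_type]
    refine Finset.sum_congr rfl fun i _ => ?_
    rw [Matrix.mulVec, dotProduct, Finset.mul_sum]
    refine Finset.sum_congr rfl fun j _ => ?_
    rw [Pi.star_apply, RCLike.star_def]
    ring
  have hq2_expand : ∀ φ : Fin D → ℂ, qForm σ φ * qForm σ φ =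
      ∑ r : Fin D × Fin D, ∑ w : Fin D × Fin D,
        (σ r.1 r.2 * σ w.1 w.2) * mon2 r.1 r.2 w.1 w.2 φ := by
    intro φ
    rw [hq_expand, Finset.sum_mul_sum]
    refine Finset.sum_congr rfl fun r _ => Finset.sum_congr rfl fun w _ => ?_
    rw [mon2]
    ring
  have hiq : Integrable (fun φ => qForm σ φ) μ := by
    rw [funext hq_expand]
    exact integrable_finset_sum _ fun r _ => (integ_mon1 hμ r.1 r.2).const_mul _
  have hiq2 : Integrable (fun φ => qForm σ φ * qForm σ φ) μ := by
    rw [funext hq2_expand]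
    exact integrable_finset_sum _ fun r _ => integrable_finset_sum _ fun w _ =>
      (integ_mon2 hμ r.1 r.2 w.1 w.2).const_mul _
  have htr : ∑ i, σ i i = 1 := by
    rw [← hσtr]; rfl
  -- first complex moment
  have Iq : ∫ φ, qForm σ φ ∂μ = (D : ℂ)⁻¹ := by
    calc ∫ φ, qForm σ φ ∂μ
        = ∑ r : Fin D × Fin D, ∫ φ, σ r.1 r.2 * ((starRingEnd ℂ) (φ r.1) * φ r.2) ∂μ := by
          rw [funext hq_expand]
          exact integral_finset_sum _ fun r _ => (integ_mon1 hμ r.1 r.2).const_mul _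
      _ = ∑ r : Fin D × Fin D, σ r.1 r.2 * M1 μ r.1 r.2 := by
          refine Finset.sum_congr rfl fun r _ => ?_
          rw [integral_const_mul]
          rfl
      _ = ∑ r : Fin D × Fin D, σ r.1 r.2 * (if r.1 = r.2 then (D:ℂ)⁻¹ else 0) := by
          refine Finset.sum_congr rfl fun r _ => by rw [M1_val hμ]
      _ = ∑ i, σ i i * (D:ℂ)⁻¹ := by
          rw [Fintype.sum_prod_type]
          refine Finset.sum_congr rfl fun i _ => ?_
          simp [mul_ite, Finset.sum_ite_eq]
      _ = (D : ℂ)⁻¹ := by rw [← Finset.sum_mul, htr, one_mul]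
  -- second complex moment
  have Iq2 : ∫ φ, qForm σ φ * qForm σ φ ∂μ =
      ((D : ℂ) * ((D : ℂ) + 1))⁻¹ * (1 + (S : ℂ)) := by
    have hT : ∑ i, ∑ j, σ i j * σ j i = (S : ℂ) := by
      rw [hSdef]
      push_cast
      refine Finset.sum_congr rfl fun i _ => Finset.sum_congr rfl fun j _ => ?_
      have h1 : σ j i = (starRingEnd ℂ) (σ i j) := by
        rw [← Matrix.IsHermitian.apply hσ.1 j i]
        rfl
      rw [h1, Complex.mul_conj]
    set c : ℂ := ((D : ℂ) * ((D : ℂ) + 1))⁻¹ with hc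
    have hA : (∑ r : Fin D × Fin D, ∑ w : Fin D × Fin D,
        σ r.1 r.2 * σ w.1 w.2 * (if r.1 = r.2 ∧ w.1 = w.2 then (1:ℂ) else 0)) = 1 := by
      have hsplit : ∀ r w : Fin D × Fin D,
          σ r.1 r.2 * σ w.1 w.2 * (if r.1 = r.2 ∧ w.1 = w.2 then (1:ℂ) else 0) =
          (σ r.1 r.2 * (if r.1 = r.2 then 1 else 0)) *
            (σ w.1 w.2 * (if w.1 = w.2 then 1 else 0)) := by
        intro r w
        split_ifs with h1 h2 h3 <;> simp_all <;> ring
      rw [Finset.sum_congr rfl fun r _ => Finset.sum_congr rfl fun w _ => hsplit r w]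
      have hdiagsum : (∑ r : Fin D × Fin D, σ r.1 r.2 * (if r.1 = r.2 then (1:ℂ) else 0)) = 1 := by
        rw [Fintype.sum_prod_type]
        calc ∑ i, ∑ j, σ i j * (if i = j then (1:ℂ) else 0)
            = ∑ i, σ i i := by
              refine Finset.sum_congr rfl fun i _ => ?_
              simp [mul_ite, Finset.sum_ite_eq]
          _ = 1 := htr
      rw [← Finset.sum_mul_sum, hdiagsum, one_mul]
    have hB : (∑ r : Fin D × Fin D, ∑ w : Fin D × Fin D,
        σ r.1 r.2 * σ w.1 w.2 * (if r.1 = w.2 ∧ w.1 = r.2 then (1:ℂ) else 0)) = (S : ℂ) := by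
      rw [← hT]
      rw [Fintype.sum_prod_type]
      refine Finset.sum_congr rfl fun i _ => ?_
      refine Finset.sum_congr rfl fun j _ => ?_
      calc ∑ w : Fin D × Fin D, σ i j * σ w.1 w.2 * (if i = w.2 ∧ w.1 = j then (1:ℂ) else 0)
          = ∑ k, ∑ l, σ i j * σ k l * (if i = l ∧ k = j then (1:ℂ) else 0) := by
            rw [Fintype.sum_prod_type]
        _ = σ i j * σ j i := by
            have hin : ∀ k, ∑ l, σ i j * σ k l * (if i = l ∧ k = j then (1:ℂ) else 0) =
                if k = j then σ i j * σ j i else 0 := by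
              intro k
              by_cases hk : k = j
              · rw [if_pos hk]
                calc ∑ l, σ i j * σ k l * (if i = l ∧ k = j then (1:ℂ) else 0)
                    = ∑ l, (if i = l then σ i j * σ j i else 0) := by
                      refine Finset.sum_congr rfl fun l _ => ?_
                      split_ifs with h1 h2 <;> simp_all <;> ring
                  _ = σ i j * σ j i := by
                      rw [Finset.sum_ite_eq, if_pos (Finset.mem_univ i)]
              · rw [if_neg hk]
                refine Finset.sum_eq_zero fun l _ => ?_
                simp [hk]
            rw [Finset.sum_congr rfl fun k _ => hin k, Finset.sum_ite_eq',
              if_pos (Finset.mem_univ j)]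
    calc ∫ φ, qForm σ φ * qForm σ φ ∂μ
        = ∑ r : Fin D × Fin D, ∑ w : Fin D × Fin D,
            (σ r.1 r.2 * σ w.1 w.2) * M2 μ r.1 r.2 w.1 w.2 := by
          rw [funext hq2_expand]
          rw [integral_finset_sum _ fun r _ => integrable_finset_sum _ fun w _ =>
            (integ_mon2 hμ r.1 r.2 w.1 w.2).const_mul _]
          refine Finset.sum_congr rfl fun r _ => ?_
          rw [integral_finset_sum _ fun w _ => (integ_mon2 hμ r.1 r.2 w.1 w.2).const_mul _]
          refine Finset.sum_congr rfl fun w _ => ?_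
          rw [integral_const_mul]
          rfl
      _ = ∑ r : Fin D × Fin D, ∑ w : Fin D × Fin D,
            (c * (σ r.1 r.2 * σ w.1 w.2 * (if r.1 = r.2 ∧ w.1 = w.2 then 1 else 0)) +
             c * (σ r.1 r.2 * σ w.1 w.2 * (if r.1 = w.2 ∧ w.1 = r.2 then 1 else 0))) := by
          refine Finset.sum_congr rfl fun r _ => Finset.sum_congr rfl fun w _ => ?_
          rw [M2_val hμ hD]
          ring
      _ = c *
          ((∑ r : Fin D × Fin D, ∑ w : Fin D × Fin D,
              σ r.1 r.2 * σ w.1 w.2 * (if r.1 = r.2 ∧ w.1 = w.2 then 1 else 0)) +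
           (∑ r : Fin D × Fin D, ∑ w : Fin D × Fin D,
              σ r.1 r.2 * σ w.1 w.2 * (if r.1 = w.2 ∧ w.1 = r.2 then 1 else 0))) := by
          rw [mul_add, Finset.mul_sum, Finset.mul_sum, ← Finset.sum_add_distrib]
          refine Finset.sum_congr rfl fun r _ => ?_
          rw [Finset.mul_sum, Finset.mul_sum, ← Finset.sum_add_distrib]
      _ = c * (1 + (S : ℂ)) := by rw [hA, hB]
  -- hermiticity: the form is real
  have him : ∀ φ : Fin D → ℂ, (qForm σ φ).im = 0 := by
    intro φ
    rw [← Complex.conj_eq_iff_im]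
    rw [hq_expand, map_sum]
    apply Fintype.sum_equiv (Equiv.prodComm (Fin D) (Fin D))
    intro r
    simp only [Equiv.prodComm_apply, Prod.fst_swap, Prod.snd_swap, _root_.map_mul]
    have h1 : (starRingEnd ℂ) (σ r.1 r.2) = σ r.2 r.1 := Matrix.IsHermitian.apply hσ.1 r.2 r.1
    rw [h1, Complex.conj_conj]
    ring
  -- Schatten 2-norm
  have hsch : schatten 2 σ ^ 2 = S := by
    have hherm := Matrix.isHermitian_conjTranspose_mul_self σ
    have heig : ∀ i, singVals σ i ^ (2:ℝ) = hherm.eigenvalues i := by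
      intro i
      rw [singVals, show ((2:ℝ)) = ((2:ℕ):ℝ) by norm_num, Real.rpow_natCast]
      exact Real.sq_sqrt ((Matrix.posSemidef_conjTranspose_mul_self σ).eigenvalues_nonneg i)
    have h1 : ((∑ i, hherm.eigenvalues i : ℝ) : ℂ) = (σ.conjTranspose * σ).trace := by
      conv_rhs => rw [hherm.spectral_theorem]
      rw [Unitary.conjStarAlgAut_apply, Matrix.trace_mul_cycle, Unitary.coe_star_mul_self, one_mul, Matrix.trace_diagonal]
      push_cast
      rfl
    have h2 : (σ.conjTranspose * σ).trace = (S : ℂ) := by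
      calc (σ.conjTranspose * σ).trace
          = ∑ i, ∑ j, star (σ j i) * σ j i := by
            simp [Matrix.trace, Matrix.diag, Matrix.mul_apply, Matrix.conjTranspose_apply]
        _ = ∑ i, ∑ j, ((Complex.normSq (σ j i) : ℝ) : ℂ) := by
            refine Finset.sum_congr rfl fun i _ => Finset.sum_congr rfl fun j _ => ?_
            rw [Complex.normSq_eq_conj_mul_self]
            rfl
        _ = (S : ℂ) := by
            rw [hSdef]
            push_cast
            exact Finset.sum_comm
    have hsum_eig : ∑ i, hherm.eigenvalues i = S := by
      have := h1.trans h2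
      exact_mod_cast this
    rw [schatten, Finset.sum_congr rfl fun i _ => heig i, hsum_eig]
    rw [← Real.rpow_natCast (S ^ (1/(2:ℝ))) 2, ← Real.rpow_mul hS0]
    norm_num
  -- first statement
  have E1 : (∫ φ, (D : ℝ) * (qForm σ φ).re ∂μ) = 1 := by
    rw [integral_const_mul]
    have h1 : ∫ φ, (qForm σ φ).re ∂μ = (∫ φ, qForm σ φ ∂μ).re := integral_re hiq
    rw [h1, Iq]
    have : ((D : ℂ))⁻¹ = (((D : ℝ))⁻¹ : ℝ) := by push_cast; rfl
    rw [this, Complex.ofReal_re]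
    field_simp
  -- second statement
  have E2 : (∫ φ, ((D : ℝ) * (qForm σ φ).re) ^ 2 ∂μ) = (D : ℝ) * (1 + S) / ((D : ℝ) + 1) := by
    have hpt2 : ∀ φ : Fin D → ℂ, ((D : ℝ) * (qForm σ φ).re) ^ 2 =
        (D : ℝ)^2 * (qForm σ φ * qForm σ φ).re := by
      intro φ
      rw [Complex.mul_re, him φ]
      ring
    rw [integral_congr_ae (Filter.Eventually.of_forall hpt2), integral_const_mul]
    have h1 : ∫ φ, (qForm σ φ * qForm σ φ).re ∂μ =
        (∫ φ, qForm σ φ * qForm σ φ ∂μ).re := integral_re hiq2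
    rw [h1, Iq2]
    have hcast : ((D : ℂ) * ((D : ℂ) + 1))⁻¹ * (1 + (S : ℂ)) =
        (((((D : ℝ) * ((D : ℝ) + 1))⁻¹ * (1 + S)) : ℝ) : ℂ) := by push_cast; ring
    rw [hcast, Complex.ofReal_re]
    field_simp
  refine ⟨E1, E2.trans (by rw [hsch]), ?_⟩
  -- third statement
  have hpt3 : ∀ φ : Fin D → ℂ, (1 - (D : ℝ) * (qForm σ φ).re) ^ 2 =
      1 - 2 * ((D : ℝ) * (qForm σ φ).re) + ((D : ℝ) * (qForm σ φ).re) ^ 2 := by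
    intro φ; ring
  rw [integral_congr_ae (Filter.Eventually.of_forall hpt3)]
  have hint1 : Integrable (fun φ => (2:ℝ) * ((D : ℝ) * (qForm σ φ).re)) μ :=
    ((hiq.re.const_mul ((D:ℝ))).const_mul (2:ℝ))
  have hint2 : Integrable (fun φ => ((D : ℝ) * (qForm σ φ).re) ^ 2) μ := by
    have hpt2 : ∀ φ : Fin D → ℂ, ((D : ℝ) * (qForm σ φ).re) ^ 2 =
        (D : ℝ)^2 * (qForm σ φ * qForm σ φ).re := by
      intro φ
      rw [Complex.mul_re, him φ]
      ring
    rw [funext hpt2]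
    exact hiq2.re.const_mul _
  have := hμ.prob
  have hsub : Integrable (fun φ : Fin D → ℂ => 1 - 2 * ((D : ℝ) * (qForm σ φ).re)) μ :=
    (integrable_const 1).sub hint1
  rw [integral_add hsub hint2, integral_sub (integrable_const (1:ℝ)) hint1]
  have hmul : ∫ φ, (2:ℝ) * ((D : ℝ) * (qForm σ φ).re) ∂μ = 2 := by
    rw [integral_const_mul, E1]
    norm_num
  rw [hmul, E2, hsch]
  simp only [integral_const, probReal_univ, measure_univ, ENNReal.toReal_one, smul_eq_mul, mul_one, one_smul]
  field_simp
  ring
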